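/- For the uniform random Boolean cellular automaton (rule distribution uniform over all 16 Boolean rules), the probability σ_N that a cell on the circle of size N stabilizes satisfies |σ_N − σ_*| ≤ 4·(7/8)^{N/2} for every N ≥ 3, where σ_* is the probability that a cell of the infinite automaton on ℤ stabilizes. In particular σ_N → σ_* as N → ∞. -/

import Mathlib

open MeasureTheory ProbabilityTheory Filter

/-- A Boolean rule: a function `{0,1} × {0,1} → {0,1}`. -/
abbrev Rule : Type := Bool → Bool → Bool

/-- The constant-0 rule. -/
def phi0 : Rule := fun _ _ => false
/-- The constant-1 rule. -/
def phi15 : Rule := fun _ _ => true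

/-- The Bernoulli(1/2) distribution on `Bool`. -/
noncomputable def berHalf : Measure Bool :=
  (2 : ENNReal)⁻¹ • (Measure.dirac true + Measure.dirac false)

/-- Evolution of an inhomogeneous cellular automaton on ℤ:
`x_i(t+1) = φ_i(x_{i-1}(t), x_{i+1}(t))`. -/
def evolveZ (φ : ℤ → Rule) (x0 : ℤ → Bool) : ℕ → ℤ → Bool
  | 0 => x0
  | t+1 => fun i => φ i (evolveZ φ x0 t (i-1)) (evolveZ φ x0 t (i+1))

/-- Evolution of an inhomogeneous cellular automaton on the circle ℤ/Nℤ. -/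
def evolveC (N : ℕ) (φ : ZMod N → Rule) (x0 : ZMod N → Bool) : ℕ → ZMod N → Bool
  | 0 => x0
  | t+1 => fun i => φ i (evolveC N φ x0 t (i-1)) (evolveC N φ x0 t (i+1))

/-- A trajectory `t ↦ x(t)` stabilizes if it is eventually constant. -/
def Stabilizes (x : ℕ → Bool) : Prop := ∃ T, ∀ t, T ≤ t → x t = x T

/-- Trajectory of cell `i` in the infinite RBCA realization where cell `j` has rule
`(W j ω).1` and initial value `(W j ω).2`. -/
def traj (W : ℤ → Ω → Rule × Bool) (ω : Ω) (i : ℤ) : ℕ → Bool :=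
  fun t => evolveZ (fun j => (W j ω).1) (fun j => (W j ω).2) t i

/-- Trajectory of cell `i` in the size-`N` RBCA realization where cell `j` has rule
`(W j ω).1` and initial value `(W j ω).2`. -/
def trajC (N : ℕ) (W : ZMod N → Ω → Rule × Bool) (ω : Ω) (i : ZMod N) : ℕ → Bool :=
  fun t => evolveC N (fun j => (W j ω).1) (fun j => (W j ω).2) t i

namespace Stmt4Aux

variable {mu : Measure Rule} [IsProbabilityMeasure mu]
variable {Ω' κ : Type*} [MeasurableSpace Ω'] {P : Measure Ω'} [IsProbabilityMeasure P]
  {V : κ → Ω' → Rule × Bool}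

instance : IsProbabilityMeasure berHalf := by
  constructor
  simp only [berHalf, Measure.smul_apply, Measure.add_apply, smul_eq_mul, measure_univ]
  rw [show (1+1 : ENNReal) = 2 from one_add_one_eq_two, ENNReal.inv_mul_cancel] <;> norm_num

/-- A rule is constant if its value does not depend on the inputs. -/
def IsConst (r : Rule) : Prop := ∀ x y x' y', r x y = r x' y'

lemma isConst_iff {r : Rule} : IsConst r ↔ r = phi0 ∨ r = phi15 := by
  constructor
  · intro h
    cases hv : r false false
    · left; funext x y; rw [show phi0 x y = false from rfl, ← hv]; exact h x y false false
    · right; funext x y; rw [show phi15 x y = true from rfl, ← hv]; exact h x y false false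
  · rintro (rfl | rfl) <;> exact fun _ _ _ _ => rfl

/-- The set of configurations whose rule is constant. -/
def CS : Set (Rule × Bool) := {e | IsConst e.1}

lemma mu_isConst {mu : Measure Rule} (hunif : ∀ r : Rule, mu {r} = 1/16) :
    mu {r | IsConst r} = 1/8 := by
  have h15 : phi0 ≠ phi15 := by
    intro h
    have := congrFun (congrFun h false) false
    simp [phi0, phi15] at this
  have : {r | IsConst r} = ({phi0, phi15} : Set Rule) := by
    ext r; simp [isConst_iff, Set.mem_insert_iff]
  rw [this, Set.insert_eq, measure_union (by simpa using h15) (measurableSet_singleton _),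
    hunif, hunif]
  rw [ENNReal.div_add_div_same, ENNReal.div_eq_div_iff] <;> norm_num

lemma nu_CS {mu : Measure Rule} [IsProbabilityMeasure mu]
    (hunif : ∀ r : Rule, mu {r} = 1/16) : (mu.prod berHalf) CS = 1/8 := by
  have : CS = {r | IsConst r} ×ˢ (Set.univ : Set Bool) := by
    ext ⟨r, x⟩; simp [CS]
  rw [this, Measure.prod_prod, measure_univ, mul_one, mu_isConst hunif]

lemma nu_CSc {mu : Measure Rule} [IsProbabilityMeasure mu]
    (hunif : ∀ r : Rule, mu {r} = 1/16) : (mu.prod berHalf) CSᶜ = 7/8 := by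
  rw [measure_compl MeasurableSet.of_discrete (measure_ne_top _ _), measure_univ, nu_CS hunif]
  refine ENNReal.sub_eq_of_eq_add (by norm_num) ?_
  rw [ENNReal.div_add_div_same, show (7+1:ENNReal) = 8 by norm_num, ENNReal.div_self] <;> norm_num

/-- Blocking lemma on the line: the trajectory between two constant-rule cells depends
only on the data between them. -/
lemma dynZ {φ φ' : ℤ → Rule} {x x' : ℤ → Bool} {a b : ℤ}
    (hca : IsConst (φ a)) (hcb : IsConst (φ b))
    (hag : ∀ j, b ≤ j → j ≤ a → φ j = φ' j ∧ x j = x' j) :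
    ∀ t j, b ≤ j → j ≤ a → evolveZ φ x t j = evolveZ φ' x' t j := by
  intro t
  induction t with
  | zero => exact fun j h1 h2 => (hag j h1 h2).2
  | succ t ih =>
    intro j h1 h2
    simp only [evolveZ]
    rcases eq_or_lt_of_le h1 with hbj | hb'
    · subst hbj
      rw [← (hag _ h1 h2).1]; exact hcb _ _ _ _
    · rcases eq_or_lt_of_le h2 with haj | ha'
      · subst haj
        rw [← (hag _ h1 h2).1]; exact hca _ _ _ _
      · rw [ih (j-1) (by omega) (by omega), ih (j+1) (by omega) (by omega),
          (hag j h1 h2).1]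

/-- Blocking lemma comparing the line and the circle. -/
lemma dynC {N : ℕ} {ψ : ZMod N → Rule} {y : ZMod N → Bool} {φ : ℤ → Rule} {x : ℤ → Bool}
    {a b : ℤ} (hca : IsConst (φ a)) (hcb : IsConst (φ b))
    (hag : ∀ j, b ≤ j → j ≤ a → φ j = ψ (j : ZMod N) ∧ x j = y (j : ZMod N)) :
    ∀ t j, b ≤ j → j ≤ a → evolveZ φ x t j = evolveC N ψ y t (j : ZMod N) := by
  intro t
  induction t with
  | zero => exact fun j h1 h2 => (hag j h1 h2).2
  | succ t ih =>
    intro j h1 h2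
    simp only [evolveZ, evolveC]
    rcases eq_or_lt_of_le h1 with hbj | hb'
    · subst hbj
      have h := (hag _ h1 h2).1
      rw [← h]; exact hcb _ _ _ _
    · rcases eq_or_lt_of_le h2 with haj | ha'
      · subst haj
        have h := (hag _ h1 h2).1
        rw [← h]; exact hca _ _ _ _
      · have e1 : ((j : ZMod N) - 1) = ((j - 1 : ℤ) : ZMod N) := by push_cast; ring
        have e2 : ((j : ZMod N) + 1) = ((j + 1 : ℤ) : ZMod N) := by push_cast; ring
        rw [e1, e2, ← ih (j-1) (by omega) (by omega), ← ih (j+1) (by omega) (by omega),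
          (hag j h1 h2).1]



lemma prod_formula (hmeas : ∀ i, Measurable (V i))
    (hind : iIndepFun V P)
    (hlaw : ∀ i, Measure.map (V i) P = mu.prod berHalf)
    (e : ℤ → κ) (s : Finset ℤ) (hinj : Set.InjOn e ↑s)
    (B : ℤ → Set (Rule × Bool)) :
    P (⋂ j ∈ s, V (e j) ⁻¹' B j) = ∏ j ∈ s, (mu.prod berHalf) (B j) := by
  classical
  set B' : κ → Set (Rule × Bool) := fun i => if h : ∃ j ∈ s, e j = i then B h.choose else ∅
    with hB'
  have hBe : ∀ j ∈ s, B' (e j) = B j := by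
    intro j hj
    have h : ∃ j' ∈ s, e j' = e j := ⟨j, hj, rfl⟩
    have hsp := h.choose_spec
    have hch : h.choose = j := hinj (Finset.mem_coe.mpr hsp.1) (Finset.mem_coe.mpr hj) hsp.2
    rw [hB']
    simp only [dif_pos h]
    rw [hch]
  have hset : (⋂ j ∈ s, V (e j) ⁻¹' B j) = ⋂ i ∈ s.image e, V i ⁻¹' B' i := by
    ext ω
    simp only [Set.mem_iInter, Finset.mem_image]
    constructor
    · rintro h i ⟨j, hj, rfl⟩
      rw [hBe j hj]; exact h j hj
    · intro h j hj
      have := h (e j) ⟨j, hj, rfl⟩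
      rwa [hBe j hj] at this
  rw [hset, hind.measure_inter_preimage_eq_mul _ (fun i _ => .of_discrete),
    Finset.prod_image (fun j hj j' hj' h => hinj (Finset.mem_coe.mpr hj) (Finset.mem_coe.mpr hj') h)]
  refine Finset.prod_congr rfl fun j hj => ?_
  rw [hBe j hj, ← Measure.map_apply (hmeas (e j)) .of_discrete, hlaw]

/-- Extension of a tuple indexed by a finite set of integers to a full configuration. -/
noncomputable def extFn (s : Finset ℤ) (v : {j // j ∈ s} → Rule × Bool) : ℤ → Rule × Bool :=
  fun j => if h : j ∈ s then v ⟨j, h⟩ else (phi0, false)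

open scoped Classical in
lemma loc_formula (hmeas : ∀ i, Measurable (V i))
    (hind : iIndepFun V P)
    (hlaw : ∀ i, Measure.map (V i) P = mu.prod berHalf)
    (e : ℤ → κ) (s : Finset ℤ) (hinj : Set.InjOn e ↑s)
    (Q : (ℤ → Rule × Bool) → Prop)
    (hQ : ∀ c c', (∀ j ∈ s, c j = c' j) → Q c → Q c') :
    P {ω | Q fun j => V (e j) ω} =
      ∑ v ∈ Finset.univ.filter (fun v : ({j // j ∈ s} → Rule × Bool) => Q (extFn s v)),
        ∏ j ∈ s, (mu.prod berHalf) {extFn s v j} := by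
  have key : {ω | Q fun j => V (e j) ω} =
      ⋃ v ∈ Finset.univ.filter (fun v : ({j // j ∈ s} → Rule × Bool) => Q (extFn s v)),
        ⋂ j ∈ s, V (e j) ⁻¹' {extFn s v j} := by
    ext ω
    simp only [Set.mem_setOf_eq, Set.mem_iUnion, Finset.mem_filter, Finset.mem_univ, true_and,
      Set.mem_iInter, Set.mem_preimage, Set.mem_singleton_iff]
    constructor
    · intro h
      refine ⟨fun j => V (e j.1) ω, ?_, ?_⟩
      · exact hQ _ _ (fun j hj => by simp [extFn, hj]) h
      · intro j hj; simp [extFn, hj]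
    · rintro ⟨v, hv, hag⟩
      exact hQ _ _ (fun j hj => (hag j hj).symm) hv
  rw [key, measure_biUnion_finset ?disj (fun v _ => Finset.measurableSet_biInter _
    (fun j _ => (hmeas (e j)) MeasurableSet.of_discrete))]
  · exact Finset.sum_congr rfl fun v hv => prod_formula hmeas hind hlaw e s hinj _
  case disj =>
    intro v hv v' hv' hne
    simp only [Function.onFun]
    rw [Set.disjoint_left]
    intro ω h1 h2
    apply hne
    funext j
    simp only [Set.mem_iInter, Set.mem_preimage, Set.mem_singleton_iff] at h1 h2
    have e1 := h1 j.1 j.2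
    have e2 := h2 j.1 j.2
    have : extFn s v j.1 = extFn s v' j.1 := by rw [← e1, ← e2]
    simpa [extFn, j.2] using this


lemma castInjOn {N : ℕ} (hN : 0 < N) (lo hi : ℤ) (h : hi - lo < N) :
    Set.InjOn (fun j : ℤ => (j : ZMod N)) ↑(Finset.Icc lo hi) := by
  intro j hj j' hj' hh
  simp only [Finset.coe_Icc, Set.mem_Icc] at hj hj'
  have hd : (N:ℤ) ∣ j' - j := by
    have := (ZMod.intCast_eq_intCast_iff _ _ _).mp hh
    exact this.dvd
  rcases hd with ⟨k, hk⟩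
  have hk0 : k = 0 := by
    rcases lt_trichotomy k 0 with h1 | h1 | h1
    · have hk1 : k ≤ -1 := by omega
      have : (N:ℤ) * k ≤ (N:ℤ) * (-1) := by
        apply mul_le_mul_of_nonneg_left hk1 (by positivity)
      omega
    · exact h1
    · have hk1 : 1 ≤ k := by omega
      have : (N:ℤ) * 1 ≤ (N:ℤ) * k := by
        apply mul_le_mul_of_nonneg_left hk1 (by positivity)
      omega
  rw [hk0, mul_zero] at hk
  omega

lemma measurable_evolveZ {Ω' : Type*} [MeasurableSpace Ω'] {W : ℤ → Ω' → Rule × Bool}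
    (hmeas : ∀ i, Measurable (W i)) (t : ℕ) :
    ∀ i, Measurable (fun ω => evolveZ (fun j => (W j ω).1) (fun j => (W j ω).2) t i) := by
  induction t with
  | zero => exact fun i => measurable_snd.comp (hmeas i)
  | succ t ih =>
    intro i
    have : (fun ω => evolveZ (fun j => (W j ω).1) (fun j => (W j ω).2) (t+1) i) =
        (fun p : (Rule × Bool) × Bool × Bool => p.1.1 p.2.1 p.2.2) ∘
          (fun ω => (W i ω, (evolveZ (fun j => (W j ω).1) (fun j => (W j ω).2) t (i-1),
            evolveZ (fun j => (W j ω).1) (fun j => (W j ω).2) t (i+1)))) := rfl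
    rw [this]
    exact Measurable.of_discrete.comp ((hmeas i).prodMk ((ih (i-1)).prodMk (ih (i+1))))

lemma measurable_evolveC {N : ℕ} {Ω' : Type*} [MeasurableSpace Ω'] {W : ZMod N → Ω' → Rule × Bool}
    (hmeas : ∀ i, Measurable (W i)) (t : ℕ) :
    ∀ i, Measurable (fun ω => evolveC N (fun j => (W j ω).1) (fun j => (W j ω).2) t i) := by
  induction t with
  | zero => exact fun i => measurable_snd.comp (hmeas i)
  | succ t ih =>
    intro i
    have : (fun ω => evolveC N (fun j => (W j ω).1) (fun j => (W j ω).2) (t+1) i) =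
        (fun p : (Rule × Bool) × Bool × Bool => p.1.1 p.2.1 p.2.2) ∘
          (fun ω => (W i ω, (evolveC N (fun j => (W j ω).1) (fun j => (W j ω).2) t (i-1),
            evolveC N (fun j => (W j ω).1) (fun j => (W j ω).2) t (i+1)))) := rfl
    rw [this]
    exact Measurable.of_discrete.comp ((hmeas i).prodMk ((ih (i-1)).prodMk (ih (i+1))))

lemma measurableSet_stab {Ω' : Type*} [MeasurableSpace Ω'] {f : ℕ → Ω' → Bool}
    (hf : ∀ t, Measurable (f t)) : MeasurableSet {ω | Stabilizes (fun t => f t ω)} := by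
  have : {ω | Stabilizes (fun t => f t ω)} = ⋃ T, ⋂ t, {ω | T ≤ t → f t ω = f T ω} := by
    ext ω; simp [Stabilizes]
  rw [this]
  refine MeasurableSet.iUnion fun T => MeasurableSet.iInter fun t => ?_
  by_cases h : T ≤ t
  · simp only [h, true_implies]
    exact measurableSet_eq_fun (hf t) (hf T)
  · simp only [h, false_implies, Set.setOf_true]
    exact MeasurableSet.univ

def Pat (c : ℤ → Rule × Bool) (a b : ℤ) : Prop :=
  (IsConst (c a).1 ∧ ∀ j, 0 < j → j < a → ¬ IsConst (c j).1) ∧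
  (IsConst (c (-b)).1 ∧ ∀ j, 0 < j → j < b → ¬ IsConst (c (-j)).1)

lemma pat_unique {c : ℤ → Rule × Bool} {a b a' b' : ℤ}
    (h1a : 1 ≤ a) (h1b : 1 ≤ b) (h1a' : 1 ≤ a') (h1b' : 1 ≤ b')
    (h : Pat c a b) (h' : Pat c a' b') : a = a' ∧ b = b' := by
  constructor
  · rcases lt_trichotomy a a' with hh | hh | hh
    · exact absurd h.1.1 (h'.1.2 a h1a hh)
    · exact hh
    · exact absurd h'.1.1 (h.1.2 a' h1a' hh)
  · rcases lt_trichotomy b b' with hh | hh | hh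
    · exact absurd h.2.1 (h'.2.2 b h1b hh)
    · exact hh
    · exact absurd h'.2.1 (h.2.2 b' h1b' hh)

lemma decomp {Ω' : Type*} [MeasurableSpace Ω'] (P : Measure Ω') {ι' : Type*} (pr : Finset ι')
    (S : Set Ω') (A : ι' → Set Ω') (hS : MeasurableSet S) (hA : ∀ p, MeasurableSet (A p))
    (hdisj : (↑pr : Set ι').PairwiseDisjoint A) :
    P S = ∑ p ∈ pr, P (S ∩ A p) + P (S \ ⋃ p ∈ pr, A p) := by
  have hu : S = (⋃ p ∈ pr, S ∩ A p) ∪ (S \ ⋃ p ∈ pr, A p) := by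
    ext ω
    by_cases h : ω ∈ ⋃ p ∈ pr, A p <;> simp_all [Set.mem_iUnion] <;> tauto
  have hmU : MeasurableSet (⋃ p ∈ pr, A p) := pr.measurableSet_biUnion (fun p _ => hA p)
  nth_rewrite 1 [hu]
  rw [measure_union ?hd (hS.diff hmU)]
  · rw [measure_biUnion_finset (hdisj.mono_on (fun p _ => Set.inter_subset_right))
      (fun p _ => hS.inter (hA p))]
  case hd =>
    rw [Set.disjoint_left]
    rintro ω hω1 hω2
    simp only [Set.mem_iUnion, Set.mem_inter_iff] at hω1
    obtain ⟨p, hp, -, hpa⟩ := hω1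
    exact hω2.2 (Set.mem_biUnion hp hpa)

lemma cover {M : ℤ} (hM : 3 ≤ M) (c : ℤ → Rule × Bool)
    (h : ∀ a b : ℤ, 1 ≤ a → 1 ≤ b → a + b ≤ M - 1 → ¬ Pat c a b) :
    (∀ j, 1 ≤ j → j ≤ M - 2 → ¬ IsConst (c j).1) ∨
    ∃ a, 1 ≤ a ∧ a ≤ M - 2 ∧ IsConst (c a).1 ∧ (∀ j, 0 < j → j < a → ¬ IsConst (c j).1) ∧
      (∀ j, 1 ≤ j → j ≤ M - 1 - a → ¬ IsConst (c (-j)).1) := by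
  classical
  by_cases hR : ∀ j, 1 ≤ j → j ≤ M - 2 → ¬ IsConst (c j).1
  · exact Or.inl hR
  · right
    push_neg at hR
    obtain ⟨j0, hj01, hj02, hj0c⟩ := hR
    set T := (Finset.Icc (1:ℤ) (M-2)).filter (fun j => IsConst (c j).1) with hT
    have hne : T.Nonempty := ⟨j0, by
      simp only [hT, Finset.mem_filter, Finset.mem_Icc]
      exact ⟨⟨hj01, hj02⟩, hj0c⟩⟩
    set a := T.min' hne with haa
    have haT : a ∈ T := T.min'_mem hne
    simp only [hT, Finset.mem_filter, Finset.mem_Icc] at haT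
    have hmin : ∀ j, 0 < j → j < a → ¬ IsConst (c j).1 := by
      intro j hj1 hj2 hc
      have hjT : j ∈ T := by
        simp only [hT, Finset.mem_filter, Finset.mem_Icc]
        exact ⟨⟨by omega, by omega⟩, hc⟩
      have := T.min'_le j hjT
      omega
    refine ⟨a, haT.1.1, haT.1.2, haT.2, hmin, ?_⟩
    intro j hj1 hj2 hc
    set Tb := (Finset.Icc (1:ℤ) (M-1-a)).filter (fun b => IsConst (c (-b)).1) with hTb
    have hneb : Tb.Nonempty := ⟨j, by
      simp only [hTb, Finset.mem_filter, Finset.mem_Icc]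
      exact ⟨⟨hj1, hj2⟩, hc⟩⟩
    set b := Tb.min' hneb with hbb
    have hbT : b ∈ Tb := Tb.min'_mem hneb
    simp only [hTb, Finset.mem_filter, Finset.mem_Icc] at hbT
    refine h a b haT.1.1 hbT.1.1 (by omega) ⟨⟨haT.2, hmin⟩, hbT.2, ?_⟩
    intro j' hj'1 hj'2 hc'
    have hj'T : j' ∈ Tb := by
      simp only [hTb, Finset.mem_filter, Finset.mem_Icc]
      exact ⟨⟨by omega, by omega⟩, hc'⟩
    have := Tb.min'_le j' hj'T
    omega


/-- The local pattern of sets for the union bound event. -/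
def Bf (a j : ℤ) : Set (Rule × Bool) := if j = a then CS else if j = 0 then Set.univ else CSᶜ

lemma prod_Bf {mu : Measure Rule} [IsProbabilityMeasure mu]
    (hunif : ∀ r : Rule, mu {r} = 1/16) {N : ℕ} (hN : 3 ≤ N)
    {a : ℤ} (h1 : 1 ≤ a) (h2 : a ≤ (N:ℤ) - 2) :
    ∏ j ∈ Finset.Icc (a + 1 - (N:ℤ)) a, (mu.prod berHalf) (Bf a j)
      = 1/8 * (7/8) ^ (N - 2) := by
  classical
  have haS : a ∈ Finset.Icc (a+1-(N:ℤ)) a := by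
    simp only [Finset.mem_Icc]; omega
  rw [← Finset.mul_prod_erase _ _ haS]
  have h0S : (0:ℤ) ∈ (Finset.Icc (a+1-(N:ℤ)) a).erase a := by
    simp only [Finset.mem_erase, Finset.mem_Icc]; omega
  rw [← Finset.mul_prod_erase _ _ h0S]
  have hBa : Bf a a = CS := by simp [Bf]
  have hB0 : Bf a 0 = Set.univ := by
    simp [Bf, show (0:ℤ) ≠ a by omega]
  have hrest : ∀ j ∈ ((Finset.Icc (a+1-(N:ℤ)) a).erase a).erase 0,
      (mu.prod berHalf) (Bf a j) = 7/8 := by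
    intro j hj
    simp only [Finset.mem_erase] at hj
    rw [show Bf a j = CSᶜ by simp [Bf, hj.1, hj.2.1], nu_CSc hunif]
  have hcard : (((Finset.Icc (a+1-(N:ℤ)) a).erase a).erase 0).card = N - 2 := by
    rw [Finset.card_erase_of_mem h0S, Finset.card_erase_of_mem haS, Int.card_Icc]
    omega
  rw [Finset.prod_congr rfl hrest, Finset.prod_const, hcard, hBa, hB0, nu_CS hunif,
    measure_univ, one_mul]

lemma arith {N : ℕ} (hN : 3 ≤ N) :
    ((N : ℝ) + 6) / 8 * (7/8) ^ (N - 2) ≤ 4 * (7/8 : ℝ) ^ ((N : ℝ) / 2) := by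
  have haux : ∀ j : ℕ, (2*(j:ℝ) + 11) ≤ 32 * (8/7)^j := by
    intro j
    induction j with
    | zero => norm_num
    | succ j ih =>
      have hp : (1:ℝ) ≤ (8/7:ℝ)^j := one_le_pow₀ (by norm_num)
      calc 2*((j+1 : ℕ):ℝ) + 11 = (2*(j:ℝ)+11) + 2 := by push_cast; ring
        _ ≤ 32*(8/7)^j + 2 := by linarith
        _ ≤ 32*(8/7)^(j+1) := by rw [pow_succ]; nlinarith
  set m : ℕ := (N+1)/2 with hm
  have h1 : ((N:ℝ)/2) ≤ (m:ℝ) := by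
    have h2m : N ≤ 2*m := by omega
    have : (N:ℝ) ≤ 2*(m:ℝ) := by exact_mod_cast h2m
    linarith
  have h2 : (7/8:ℝ)^(m:ℝ) ≤ (7/8:ℝ)^((N:ℝ)/2) :=
    Real.rpow_le_rpow_of_exponent_ge (by norm_num) (by norm_num) h1
  rw [Real.rpow_natCast] at h2
  have hsuff : ((N:ℝ)+6)/8*(7/8)^(N-2) ≤ 4*(7/8:ℝ)^m := by
    rcases le_or_gt N 4 with h4 | h4
    · have : N = 3 ∨ N = 4 := by omega
      rcases this with rfl | rfl
      · norm_num [hm]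
      · norm_num [hm]
    · set j : ℕ := N - 2 - m with hj
      have hNle : ((N:ℝ)+6) ≤ 2*(j:ℝ)+11 := by
        have : N + 6 ≤ 2*j + 11 := by omega
        exact_mod_cast this
      have hkey : ((N:ℝ)+6) * (7/8)^j ≤ 32 := by
        have h32 : (32:ℝ)*(8/7)^j*(7/8)^j = 32 := by
          rw [mul_assoc, ← mul_pow]; norm_num
        calc ((N:ℝ)+6) * (7/8)^j ≤ (2*(j:ℝ)+11) * (7/8)^j := by
              apply mul_le_mul_of_nonneg_right hNle (by positivity)
          _ ≤ (32*(8/7)^j) * (7/8)^j := by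
              apply mul_le_mul_of_nonneg_right (haux j) (by positivity)
          _ = 32 := by rw [mul_assoc, ← mul_pow]; norm_num
      calc ((N:ℝ)+6)/8*(7/8)^(N-2) = (((N:ℝ)+6) * (7/8)^j) / 8 * (7/8)^m := by
            rw [show N-2 = m+j by omega, pow_add]; ring
        _ ≤ 32/8 * (7/8)^m := by
            apply mul_le_mul_of_nonneg_right _ (by positivity)
            linarith
        _ = 4*(7/8)^m := by norm_num
  linarith [mul_le_mul_of_nonneg_left h2 (by norm_num : (0:ℝ) ≤ 4)]

/-- The predicate describing stabilization localized by a blocking pattern. -/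
def QQ (a b : ℤ) (c : ℤ → Rule × Bool) : Prop :=
  Pat c a b ∧ Stabilizes (fun t => evolveZ (fun j => (c j).1) (fun j => (c j).2) t 0)

lemma QQ_loc {a b : ℤ} (ha : 1 ≤ a) (hb : 1 ≤ b) :
    ∀ c c', (∀ j ∈ Finset.Icc (-b) a, c j = c' j) → QQ a b c → QQ a b c' := by
  intro c c' hag ⟨hpat, hstab⟩
  have hag' : ∀ j, -b ≤ j → j ≤ a → c j = c' j := fun j h1 h2 =>
    hag j (Finset.mem_Icc.mpr ⟨h1, h2⟩)
  have hpat' : Pat c' a b := by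
    obtain ⟨⟨hc1, hc2⟩, hc3, hc4⟩ := hpat
    refine ⟨⟨?_, ?_⟩, ?_, ?_⟩
    · rw [← hag' a (by omega) le_rfl]; exact hc1
    · intro j h1 h2; rw [← hag' j (by omega) (by omega)]; exact hc2 j h1 h2
    · rw [← hag' (-b) (by omega) (by omega)]; exact hc3
    · intro j h1 h2; rw [← hag' (-j) (by omega) (by omega)]; exact hc4 j h1 h2
  refine ⟨hpat', ?_⟩
  have hd := dynZ (φ := fun j => (c j).1) (φ' := fun j => (c' j).1)
    (x := fun j => (c j).2) (x' := fun j => (c' j).2) (a := a) (b := -b)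
    hpat.1.1 hpat.2.1 (fun j h1 h2 => ⟨congrArg Prod.fst (hag' j h1 h2),
      congrArg Prod.snd (hag' j h1 h2)⟩)
  have h0 : (fun t => evolveZ (fun j => (c j).1) (fun j => (c j).2) t 0)
      = (fun t => evolveZ (fun j => (c' j).1) (fun j => (c' j).2) t 0) :=
    funext fun t => hd t 0 (by omega) (by omega)
  rwa [h0] at hstab

lemma measurableSet_pat {Ω' κ : Type*} [MeasurableSpace Ω'] {V : κ → Ω' → Rule × Bool}
    (hmeas : ∀ i, Measurable (V i)) (e : ℤ → κ) (a b : ℤ) :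
    MeasurableSet {ω | Pat (fun j => V (e j) ω) a b} := by
  have hCS : ∀ (i : κ), MeasurableSet {ω | IsConst (V i ω).1} :=
    fun i => (hmeas i) (MeasurableSet.of_discrete (s := CS))
  have hg : ∀ (i : κ) (p q : Prop), MeasurableSet {ω | p → q → ¬ IsConst (V i ω).1} := by
    intro i p q
    by_cases hp : p
    · by_cases hq : q
      · simp only [hp, hq, true_implies]
        exact (hCS i).compl
      · have : {ω | p → q → ¬ IsConst (V i ω).1} = Set.univ := by
          ext ω; simp [hq]
        rw [this]; exact MeasurableSet.univ
    · have : {ω | p → q → ¬ IsConst (V i ω).1} = Set.univ := by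
        ext ω; simp [hp]
      rw [this]; exact MeasurableSet.univ
  have : {ω | Pat (fun j => V (e j) ω) a b} =
      ({ω | IsConst (V (e a) ω).1} ∩ ⋂ j : ℤ, {ω | 0 < j → j < a → ¬ IsConst (V (e j) ω).1}) ∩
      ({ω | IsConst (V (e (-b)) ω).1} ∩
        ⋂ j : ℤ, {ω | 0 < j → j < b → ¬ IsConst (V (e (-j)) ω).1}) := by
    ext ω
    simp only [Pat, Set.mem_inter_iff, Set.mem_setOf_eq, Set.mem_iInter]
  rw [this]
  exact ((hCS _).inter (MeasurableSet.iInter fun j => hg _ _ _)).inter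
    ((hCS _).inter (MeasurableSet.iInter fun j => hg _ _ _))

open scoped Classical in
lemma key (mu : Measure Rule) [IsProbabilityMeasure mu]
    (hunif : ∀ r : Rule, mu {r} = 1/16)
    {Ωinf : Type*} [MeasurableSpace Ωinf] (Pinf : Measure Ωinf) [IsProbabilityMeasure Pinf]
    (Winf : ℤ → Ωinf → Rule × Bool) (hmeasinf : ∀ i, Measurable (Winf i))
    (hindepinf : iIndepFun Winf Pinf)
    (hlawinf : ∀ i, Measure.map (Winf i) Pinf = mu.prod berHalf)
    {Ωf : Type*} [MeasurableSpace Ωf] (Pf : Measure Ωf) [IsProbabilityMeasure Pf]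
    {N : ℕ} (hN : 3 ≤ N)
    (Wf : ZMod N → Ωf → Rule × Bool) (hmeasf : ∀ i, Measurable (Wf i))
    (hindepf : iIndepFun Wf Pf)
    (hlawf : ∀ i, Measure.map (Wf i) Pf = mu.prod berHalf) :
    |(Pf {ω | Stabilizes (trajC N Wf ω 0)}).toReal
        - (Pinf {ω | Stabilizes (traj Winf ω 0)}).toReal|
      ≤ ((N : ℝ) + 6) / 8 * (7/8) ^ (N - 2) := by
  classical
  have hM : 3 ≤ (N:ℤ) := by exact_mod_cast hN
  set M : ℤ := (N : ℤ) with hMdef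
  set eC : ℤ → ZMod N := fun j => (j : ZMod N) with heC
  set pr : Finset (ℤ × ℤ) := (Finset.Icc 1 (M-2) ×ˢ Finset.Icc 1 (M-2)).filter
    (fun p => p.1 + p.2 ≤ M - 1) with hpr
  have hprmem : ∀ p ∈ pr, 1 ≤ p.1 ∧ p.1 ≤ M - 2 ∧ 1 ≤ p.2 ∧ p.2 ≤ M-2 ∧ p.1 + p.2 ≤ M - 1 := by
    intro p hp
    simp only [hpr, Finset.mem_filter, Finset.mem_product, Finset.mem_Icc] at hp
    tauto
  set SL : Set Ωinf := {ω | Stabilizes (traj Winf ω 0)} with hSL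
  set SC : Set Ωf := {ω | Stabilizes (trajC N Wf ω 0)} with hSC
  set AL : ℤ × ℤ → Set Ωinf := fun p => {ω | Pat (fun j => Winf j ω) p.1 p.2} with hAL
  set AC : ℤ × ℤ → Set Ωf := fun p => {ω | Pat (fun j => Wf (eC j) ω) p.1 p.2} with hAC
  have hmSL : MeasurableSet SL := measurableSet_stab (fun t => measurable_evolveZ hmeasinf t 0)
  have hmSC : MeasurableSet SC := measurableSet_stab (fun t => measurable_evolveC hmeasf t 0)
  have hmAL : ∀ p, MeasurableSet (AL p) := fun p => measurableSet_pat hmeasinf id p.1 p.2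
  have hmAC : ∀ p, MeasurableSet (AC p) := fun p => measurableSet_pat hmeasf eC p.1 p.2
  -- pairwise disjointness
  have hdisjL : (↑pr : Set (ℤ×ℤ)).PairwiseDisjoint AL := by
    intro p hp p' hp' hne
    obtain ⟨c1, -, c3, -, -⟩ := hprmem p (Finset.mem_coe.mp hp)
    obtain ⟨c1', -, c3', -, -⟩ := hprmem p' (Finset.mem_coe.mp hp')
    simp only [Function.onFun]
    rw [Set.disjoint_left]
    intro ω h1 h2
    simp only [hAL, Set.mem_setOf_eq] at h1 h2
    exact hne (Prod.ext_iff.mpr (pat_unique c1 c3 c1' c3' h1 h2))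
  have hdisjC : (↑pr : Set (ℤ×ℤ)).PairwiseDisjoint AC := by
    intro p hp p' hp' hne
    obtain ⟨c1, -, c3, -, -⟩ := hprmem p (Finset.mem_coe.mp hp)
    obtain ⟨c1', -, c3', -, -⟩ := hprmem p' (Finset.mem_coe.mp hp')
    simp only [Function.onFun]
    rw [Set.disjoint_left]
    intro ω h1 h2
    simp only [hAC, Set.mem_setOf_eq] at h1 h2
    exact hne (Prod.ext_iff.mpr (pat_unique c1 c3 c1' c3' h1 h2))
  have hdecL := decomp Pinf pr SL AL hmSL hmAL hdisjL
  have hdecC := decomp Pf pr SC AC hmSC hmAC hdisjC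
  -- equality of the main terms
  have hmain : ∀ p ∈ pr, Pinf (SL ∩ AL p) = Pf (SC ∩ AC p) := by
    intro p hp
    obtain ⟨c1, c2, c3, c4, c5⟩ := hprmem p hp
    have hinjC : Set.InjOn eC ↑(Finset.Icc (-p.2) p.1) :=
      castInjOn (by omega) _ _ (by omega)
    have hL : SL ∩ AL p = {ω | QQ p.1 p.2 fun j => Winf (id j) ω} := by
      rw [hSL, hAL]
      ext ω
      exact ⟨fun h => ⟨h.2, h.1⟩, fun h => ⟨h.2, h.1⟩⟩
    have hC : SC ∩ AC p = {ω | QQ p.1 p.2 fun j => Wf (eC j) ω} := by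
      rw [hSC, hAC]
      ext ω
      simp only [Set.mem_inter_iff, Set.mem_setOf_eq]
      have hdyn : Pat (fun j => Wf (eC j) ω) p.1 p.2 →
          (fun t => evolveZ (fun j => (Wf (eC j) ω).1) (fun j => (Wf (eC j) ω).2) t 0)
            = trajC N Wf ω 0 := by
        intro hp'
        have hd := dynC (N := N) (ψ := fun i => (Wf i ω).1) (y := fun i => (Wf i ω).2)
          (φ := fun j => (Wf (eC j) ω).1) (x := fun j => (Wf (eC j) ω).2)
          (a := p.1) (b := -p.2) hp'.1.1 hp'.2.1 (fun j _ _ => ⟨rfl, rfl⟩)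
        funext t
        rw [hd t 0 (by omega) (by omega)]
        show evolveC N _ _ t (((0:ℤ) : ZMod N)) = _
        rw [Int.cast_zero]
        rfl
      constructor
      · rintro ⟨hs, hp'⟩
        refine ⟨hp', ?_⟩
        show Stabilizes (fun t =>
          evolveZ (fun j => (Wf (eC j) ω).1) (fun j => (Wf (eC j) ω).2) t 0)
        rw [hdyn hp']
        exact hs
      · rintro ⟨hp', hs⟩
        refine ⟨?_, hp'⟩
        have hs' : Stabilizes (fun t =>
            evolveZ (fun j => (Wf (eC j) ω).1) (fun j => (Wf (eC j) ω).2) t 0) := hs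
        rwa [hdyn hp'] at hs'
    rw [hL, hC,
      loc_formula hmeasinf hindepinf hlawinf id _ (Set.injOn_id _)
        (QQ p.1 p.2) (QQ_loc c1 c3),
      loc_formula hmeasf hindepf hlawf eC _ hinjC (QQ p.1 p.2) (QQ_loc c1 c3)]

  -- bad events and union bound
  set NRL : Set Ωinf := ⋂ j ∈ Finset.Icc (1:ℤ) (M-2), Winf (id j) ⁻¹' CSᶜ with hNRL
  set ELa : ℤ → Set Ωinf := fun a => ⋂ j ∈ Finset.Icc (a+1-M) a, Winf (id j) ⁻¹' (Bf a j)
    with hELa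
  set NRC : Set Ωf := ⋂ j ∈ Finset.Icc (1:ℤ) (M-2), Wf (eC j) ⁻¹' CSᶜ with hNRC
  set ECa : ℤ → Set Ωf := fun a => ⋂ j ∈ Finset.Icc (a+1-M) a, Wf (eC j) ⁻¹' (Bf a j)
    with hECa
  have hcard12 : (Finset.Icc (1:ℤ) (M-2)).card = N-2 := by
    rw [Int.card_Icc]; omega
  -- the coverage argument, line version
  have hsubL : SL \ (⋃ p ∈ pr, AL p) ⊆ NRL ∪ ⋃ a ∈ Finset.Icc (1:ℤ) (M-2), ELa a := by
    intro ω hω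
    have hnp : ∀ a b : ℤ, 1 ≤ a → 1 ≤ b → a + b ≤ M - 1 → ¬ Pat (fun j => Winf j ω) a b := by
      intro a b h1 h2 h3 hpat
      refine hω.2 (Set.mem_biUnion (show (a,b) ∈ pr from ?_) ?_)
      · simp only [hpr, Finset.mem_filter, Finset.mem_product, Finset.mem_Icc]
        omega
      · rw [hAL]; exact hpat
    rcases cover hM (fun j => Winf j ω) hnp with h | ⟨a, h1, h2, h3, h4, h5⟩
    · left
      rw [hNRL]
      simp only [Set.mem_iInter, Set.mem_preimage, Finset.mem_Icc, Set.mem_compl_iff]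
      intro j hj
      exact h j hj.1 hj.2
    · right
      refine Set.mem_biUnion (show a ∈ Finset.Icc (1:ℤ) (M-2) from Finset.mem_Icc.mpr ⟨h1, h2⟩) ?_
      simp only [hELa, Set.mem_iInter, Set.mem_preimage, Finset.mem_Icc]
      rintro j ⟨hjl, hjr⟩
      by_cases hja : j = a
      · subst hja
        simp only [Bf, if_pos rfl]
        exact h3
      · by_cases hj0 : j = 0
        · subst hj0
          simp [Bf, hja]
        · simp only [Bf, if_neg hja, if_neg hj0, Set.mem_compl_iff]
          rcases lt_or_gt_of_ne hj0 with hneg | hpos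
          · have := h5 (-j) (by omega) (by omega)
            rw [neg_neg] at this
            exact this
          · exact h4 j hpos (by omega)
  -- the coverage argument, circle version
  have hsubC : SC \ (⋃ p ∈ pr, AC p) ⊆ NRC ∪ ⋃ a ∈ Finset.Icc (1:ℤ) (M-2), ECa a := by
    intro ω hω
    have hnp : ∀ a b : ℤ, 1 ≤ a → 1 ≤ b → a + b ≤ M - 1 → ¬ Pat (fun j => Wf (eC j) ω) a b := by
      intro a b h1 h2 h3 hpat
      refine hω.2 (Set.mem_biUnion (show (a,b) ∈ pr from ?_) ?_)
      · simp only [hpr, Finset.mem_filter, Finset.mem_product, Finset.mem_Icc]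
        omega
      · rw [hAC]; exact hpat
    rcases cover hM (fun j => Wf (eC j) ω) hnp with h | ⟨a, h1, h2, h3, h4, h5⟩
    · left
      rw [hNRC]
      simp only [Set.mem_iInter, Set.mem_preimage, Finset.mem_Icc, Set.mem_compl_iff]
      intro j hj
      exact h j hj.1 hj.2
    · right
      refine Set.mem_biUnion (show a ∈ Finset.Icc (1:ℤ) (M-2) from Finset.mem_Icc.mpr ⟨h1, h2⟩) ?_
      simp only [hECa, Set.mem_iInter, Set.mem_preimage, Finset.mem_Icc]
      rintro j ⟨hjl, hjr⟩
      by_cases hja : j = a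
      · subst hja
        simp only [Bf, if_pos rfl]
        exact h3
      · by_cases hj0 : j = 0
        · subst hj0
          simp [Bf, hja]
        · simp only [Bf, if_neg hja, if_neg hj0, Set.mem_compl_iff]
          rcases lt_or_gt_of_ne hj0 with hneg | hpos
          · have := h5 (-j) (by omega) (by omega)
            rw [neg_neg] at this
            exact this
          · exact h4 j hpos (by omega)
  -- probabilities of the bad building blocks
  set βE : ENNReal := (7/8)^(N-2) + (N-2 : ℕ) * (1/8 * (7/8)^(N-2)) with hβE
  have hPNRL : Pinf NRL = (7/8 : ENNReal)^(N-2) := by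
    rw [hNRL, prod_formula hmeasinf hindepinf hlawinf id _ (Set.injOn_id _) (fun _ => CSᶜ)]
    rw [Finset.prod_const, nu_CSc hunif, hcard12]
  have hPNRC : Pf NRC = (7/8 : ENNReal)^(N-2) := by
    rw [hNRC, prod_formula hmeasf hindepf hlawf eC _ (castInjOn (by omega) _ _ (by omega))
      (fun _ => CSᶜ)]
    rw [Finset.prod_const, nu_CSc hunif, hcard12]
  have hPELa : ∀ a ∈ Finset.Icc (1:ℤ) (M-2), Pinf (ELa a) = 1/8 * (7/8 : ENNReal)^(N-2) := by
    intro a ha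
    simp only [Finset.mem_Icc] at ha
    simp only [hELa]
    rw [prod_formula hmeasinf hindepinf hlawinf id _ (Set.injOn_id _) (Bf a)]
    exact prod_Bf hunif hN ha.1 ha.2
  have hPECa : ∀ a ∈ Finset.Icc (1:ℤ) (M-2), Pf (ECa a) = 1/8 * (7/8 : ENNReal)^(N-2) := by
    intro a ha
    simp only [Finset.mem_Icc] at ha
    simp only [hECa]
    rw [prod_formula hmeasf hindepf hlawf eC _ (castInjOn (by omega) _ _ (by omega)) (Bf a)]
    exact prod_Bf hunif hN ha.1 ha.2
  have hbadL : Pinf (SL \ ⋃ p ∈ pr, AL p) ≤ βE := by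
    refine le_trans (measure_mono hsubL) (le_trans (measure_union_le _ _) ?_)
    rw [hβE, hPNRL]
    refine add_le_add le_rfl ?_
    calc Pinf (⋃ a ∈ Finset.Icc (1:ℤ) (M-2), ELa a)
        ≤ ∑ a ∈ Finset.Icc (1:ℤ) (M-2), Pinf (ELa a) := measure_biUnion_finset_le _ _
      _ = ∑ _a ∈ Finset.Icc (1:ℤ) (M-2), (1/8 * (7/8 : ENNReal)^(N-2)) :=
          Finset.sum_congr rfl hPELa
      _ = (N-2 : ℕ) * (1/8 * (7/8 : ENNReal)^(N-2)) := by
          rw [Finset.sum_const, nsmul_eq_mul, hcard12]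
  have hbadC : Pf (SC \ ⋃ p ∈ pr, AC p) ≤ βE := by
    refine le_trans (measure_mono hsubC) (le_trans (measure_union_le _ _) ?_)
    rw [hβE, hPNRC]
    refine add_le_add le_rfl ?_
    calc Pf (⋃ a ∈ Finset.Icc (1:ℤ) (M-2), ECa a)
        ≤ ∑ a ∈ Finset.Icc (1:ℤ) (M-2), Pf (ECa a) := measure_biUnion_finset_le _ _
      _ = ∑ _a ∈ Finset.Icc (1:ℤ) (M-2), (1/8 * (7/8 : ENNReal)^(N-2)) :=
          Finset.sum_congr rfl hPECa
      _ = (N-2 : ℕ) * (1/8 * (7/8 : ENNReal)^(N-2)) := by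
          rw [Finset.sum_const, nsmul_eq_mul, hcard12]
  -- combine
  set S0 : ENNReal := ∑ p ∈ pr, Pinf (SL ∩ AL p) with hS0
  have hdecC' : Pf SC = S0 + Pf (SC \ ⋃ p ∈ pr, AC p) := by
    rw [hdecC, hS0]
    congr 1
    exact (Finset.sum_congr rfl hmain).symm
  have hS0ne : S0 ≠ ⊤ := by
    refine ne_top_of_le_ne_top (measure_ne_top Pinf SL) ?_
    rw [hdecL]
    exact le_self_add
  have h78 : (7/8 : ENNReal) ≠ ⊤ := (ENNReal.div_lt_top (by norm_num) (by norm_num)).ne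
  have h18 : (1/8 : ENNReal) ≠ ⊤ := (ENNReal.div_lt_top (by norm_num) (by norm_num)).ne
  have hβne : βE ≠ ⊤ := by
    rw [hβE]
    exact ENNReal.add_ne_top.mpr ⟨ENNReal.pow_ne_top h78,
      ENNReal.mul_ne_top (ENNReal.natCast_ne_top _)
        (ENNReal.mul_ne_top h18 (ENNReal.pow_ne_top h78))⟩
  have hgoal : |(Pf SC).toReal - (Pinf SL).toReal| ≤ ((N : ℝ) + 6) / 8 * (7/8) ^ (N - 2) := by
    rw [hdecC', hdecL, ENNReal.toReal_add hS0ne (measure_ne_top _ _),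
      ENNReal.toReal_add hS0ne (measure_ne_top _ _)]
    have hbC : (Pf (SC \ ⋃ p ∈ pr, AC p)).toReal ≤ βE.toReal := ENNReal.toReal_mono hβne hbadC
    have hbL : (Pinf (SL \ ⋃ p ∈ pr, AL p)).toReal ≤ βE.toReal := ENNReal.toReal_mono hβne hbadL
    have hβR : βE.toReal = (7/8:ℝ)^(N-2) + ((N:ℝ)-2) * (1/8 * (7/8:ℝ)^(N-2)) := by
      rw [hβE, ENNReal.toReal_add (ENNReal.pow_ne_top h78) (ENNReal.mul_ne_top
          (ENNReal.natCast_ne_top _) (ENNReal.mul_ne_top h18 (ENNReal.pow_ne_top h78))),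
        ENNReal.toReal_mul, ENNReal.toReal_mul, ENNReal.toReal_pow,
        ENNReal.toReal_natCast, Nat.cast_sub (by omega : 2 ≤ N)]
      norm_num
    have hfin : βE.toReal ≤ ((N : ℝ) + 6) / 8 * (7/8) ^ (N - 2) := by
      rw [hβR]
      have : (7/8:ℝ)^(N-2) + ((N:ℝ)-2) * (1/8 * (7/8:ℝ)^(N-2))
          = ((N : ℝ) + 6) / 8 * (7/8) ^ (N - 2) := by ring
      rw [this]
    rw [abs_sub_le_iff]
    constructor <;>
      [linarith [hbC, ENNReal.toReal_nonneg (a := Pinf (SL \ ⋃ p ∈ pr, AL p))];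
       linarith [hbL, ENNReal.toReal_nonneg (a := Pf (SC \ ⋃ p ∈ pr, AC p))]]
  exact hgoal

end Stmt4Aux

/-- for the uniform RBCA (rule distribution uniform over the 16 Boolean
rules, i.i.d. Bernoulli(1/2) initial states), `|σ_N - σ_*| ≤ 4·(7/8)^{N/2}` for every
`N ≥ 3`, and in particular `σ_N → σ_*`. -/
theorem stmt4 (mu : Measure Rule) [IsProbabilityMeasure mu]
    (hunif : ∀ r : Rule, mu {r} = 1/16)
    -- the infinite uniform RBCA on ℤ
    {Ωinf : Type*} [MeasurableSpace Ωinf] (Pinf : Measure Ωinf) [IsProbabilityMeasure Pinf]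
    (Winf : ℤ → Ωinf → Rule × Bool) (hmeasinf : ∀ i, Measurable (Winf i))
    (hindepinf : iIndepFun Winf Pinf)
    (hlawinf : ∀ i, Measure.map (Winf i) Pinf = mu.prod berHalf)
    -- the uniform RBCA's on the circles ℤ/Nℤ
    {Ωfin : ℕ → Type*} [∀ N, MeasurableSpace (Ωfin N)]
    (Pfin : ∀ N, Measure (Ωfin N)) [∀ N, IsProbabilityMeasure (Pfin N)]
    (Wfin : ∀ N, ZMod N → Ωfin N → Rule × Bool)
    (hmeasfin : ∀ N i, Measurable (Wfin N i))
    (hindepfin : ∀ N, iIndepFun (Wfin N) (Pfin N))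
    (hlawfin : ∀ N i, Measure.map (Wfin N i) (Pfin N) = mu.prod berHalf) :
    (∀ N : ℕ, 3 ≤ N →
      |(Pfin N {ω | Stabilizes (trajC N (Wfin N) ω 0)}).toReal
          - (Pinf {ω | Stabilizes (traj Winf ω 0)}).toReal|
        ≤ 4 * (7/8 : ℝ) ^ ((N : ℝ) / 2)) ∧
    Tendsto (fun N => (Pfin N {ω | Stabilizes (trajC N (Wfin N) ω 0)}).toReal)
      atTop (nhds (Pinf {ω | Stabilizes (traj Winf ω 0)}).toReal) := by
  have hb : ∀ N : ℕ, 3 ≤ N →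
      |(Pfin N {ω | Stabilizes (trajC N (Wfin N) ω 0)}).toReal
          - (Pinf {ω | Stabilizes (traj Winf ω 0)}).toReal|
        ≤ 4 * (7/8 : ℝ) ^ ((N : ℝ) / 2) := by
    intro N hN
    exact le_trans
      (Stmt4Aux.key mu hunif Pinf Winf hmeasinf hindepinf hlawinf (Pfin N) hN
        (Wfin N) (hmeasfin N) (hindepfin N) (hlawfin N))
      (Stmt4Aux.arith hN)
  refine ⟨hb, ?_⟩
  have h0 : Tendsto (fun N : ℕ => 4 * (7/8:ℝ) ^ ((N:ℝ)/2)) atTop (nhds 0) := by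
    have heq : (fun N : ℕ => 4 * (7/8:ℝ)^((N:ℝ)/2))
        = fun N : ℕ => 4 * ((7/8:ℝ) ^ ((1:ℝ)/2))^N := by
      funext N
      rw [show ((N:ℝ)/2) = (1:ℝ)/2 * (N:ℝ) by ring, Real.rpow_mul (by norm_num),
        Real.rpow_natCast]
    rw [heq]
    have hlt : (7/8:ℝ) ^ ((1:ℝ)/2) < 1 :=
      Real.rpow_lt_one (by norm_num) (by norm_num) (by norm_num)
    have hnn : 0 ≤ (7/8:ℝ) ^ ((1:ℝ)/2) := Real.rpow_nonneg (by norm_num) _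
    have h := (tendsto_pow_atTop_nhds_zero_of_lt_one hnn hlt).const_mul (4:ℝ)
    simpa using h
  have hsq : Tendsto (fun N : ℕ =>
      (Pfin N {ω | Stabilizes (trajC N (Wfin N) ω 0)}).toReal
        - (Pinf {ω | Stabilizes (traj Winf ω 0)}).toReal) atTop (nhds 0) := by
    refine squeeze_zero_norm' ?_ h0
    filter_upwards [eventually_ge_atTop 3] with N hN
    simpa [Real.norm_eq_abs] using hb N hN
  have h2 := hsq.add_const ((Pinf {ω | Stabilizes (traj Winf ω 0)}).toReal)
  simpa using h2
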